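/- Let d ≥ 1, let ν ∈ ℝ^d be a unit vector, and let ξ ∈ ℝ^d. Then ∫_{ℝ^d} ξ·(∇²G_1(z) ξ)·max(ν·z, 0) dz = c₀·(ξ·ν)², where c₀ = 1/√(2π) and ∇²G_1(z) = (z⊗z − Id)·G_1(z) is the Hessian matrix of the standard Gaussian density G_1(z) = (2π)^{−d/2} exp(−|z|²/2). -/

import Mathlib

/-!
Under the standard Gaussian measure the integral is `E[(⟪ξ, Z⟫² - ‖ξ‖²) ⟪ν, Z⟫⁺]`. Split
`⟪ξ, Z⟫ = a X + Y` with `a = ⟪ν, ξ⟫`, `X = ⟪ν, Z⟫` standard normal and `Y = ⟪ξ - a ν, Z⟫`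
centred with `E[Y²] = ‖ξ‖² - a²`. Since `(X, Y)` is jointly Gaussian and uncorrelated, `X` and `Y`
are independent, so the terms `2 a X X⁺ Y` and `X⁺ (Y² - E[Y²])` average to zero and only
`a² E[(X² - 1) X⁺] = a² / √(2π)` survives.
-/

open MeasureTheory

/-- The standard Gaussian density `G_1(z) = (2π)^{-d/2} exp(-|z|²/2)` on `ℝ^d`. -/
noncomputable def stdGauss (d : ℕ) (z : EuclideanSpace ℝ (Fin d)) : ℝ :=
  (2 * Real.pi) ^ (-(d : ℝ) / 2) * Real.exp (-‖z‖ ^ 2 / 2)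

/-- The Hessian `∇²G_1(z) = (z ⊗ z - Id) G_1(z)` of the standard Gaussian density. -/
noncomputable def stdGaussHessian (d : ℕ) (z : EuclideanSpace ℝ (Fin d)) :
    Matrix (Fin d) (Fin d) ℝ :=
  stdGauss d z • (Matrix.vecMulVec (fun i => z i) (fun i => z i) - 1)

open ProbabilityTheory Real Set Filter Module
open scoped RealInnerProductSpace

theorem integral_Ioi_cube_sub_mul_exp_neg_sq_div_two :
    ∫ x in Ioi (0 : ℝ), (x ^ 3 - x) * exp (-x ^ 2 / 2) = 1 := by
  have hint : IntegrableOn (fun x : ℝ => (x ^ 3 - x) * exp (-x ^ 2 / 2)) (Ioi 0) := by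
    have h (n : ℕ) : IntegrableOn (fun x : ℝ => x ^ n * exp (-x ^ 2 / 2)) (Ioi 0) := by
      simpa [div_eq_inv_mul, ← neg_mul] using
        integrableOn_rpow_mul_exp_neg_mul_sq (b := 1 / 2) (by norm_num) (s := n)
          (by linarith [(Nat.cast_nonneg n : (0 : ℝ) ≤ n)])
    simpa only [sub_mul, pow_one] using (h 3).fun_sub (h 1)
  have hderiv (x : ℝ) : HasDerivAt (fun x : ℝ => -(x ^ 2 + 1) * exp (-x ^ 2 / 2))
      ((x ^ 3 - x) * exp (-x ^ 2 / 2)) x := by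
    refine ((((hasDerivAt_pow 2 x).add_const 1).fun_neg).fun_mul
      (((hasDerivAt_pow 2 x).fun_neg.div_const 2).exp)).congr_deriv ?_
    push_cast
    ring
  have hlim : Tendsto (fun x : ℝ => -(x ^ 2 + 1) * exp (-x ^ 2 / 2)) atTop (nhds 0) := by
    have hu : Tendsto (fun x : ℝ => x ^ 2 / 2) atTop atTop :=
      (tendsto_pow_atTop two_ne_zero).atTop_div_const two_pos
    have := ((((tendsto_pow_mul_exp_neg_atTop_nhds_zero 1).const_mul 2).add
      (tendsto_pow_mul_exp_neg_atTop_nhds_zero 0)).neg).comp hu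
    convert this using 2 with x
    · simp only [Function.comp_apply]
      ring_nf
    · simp
  rw [integral_Ioi_of_hasDerivAt_of_tendsto' (fun x _ => hderiv x) hint hlim]
  simp

theorem integral_sq_sub_one_mul_max_gaussianReal :
    ∫ x, (x ^ 2 - 1) * max x 0 ∂gaussianReal 0 1 = (√(2 * π))⁻¹ := by
  rw [integral_gaussianReal_eq_integral_smul one_ne_zero,
    ← setIntegral_eq_integral_of_forall_compl_eq_zero (s := Ioi 0) fun x hx => by
      simp [max_eq_right (not_lt.1 (mem_Ioi.not.1 hx))]]
  calc ∫ x in Ioi 0, gaussianPDFReal 0 1 x • ((x ^ 2 - 1) * max x 0)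
      = ∫ x in Ioi 0, (√(2 * π))⁻¹ * ((x ^ 3 - x) * exp (-x ^ 2 / 2)) := by
        refine setIntegral_congr_fun measurableSet_Ioi fun x hx => ?_
        simp only [gaussianPDFReal, smul_eq_mul, max_eq_left (le_of_lt (mem_Ioi.1 hx))]
        push_cast
        ring_nf
    _ = (√(2 * π))⁻¹ := by
        rw [integral_const_mul, integral_Ioi_cube_sub_mul_exp_neg_sq_div_two, mul_one]

theorem abs_max_zero_le (x : ℝ) : |max x 0| ≤ |x| :=
  abs_max_le_max_abs_abs.trans (by simp)

section IndepFun

variable {Ω : Type*} [MeasurableSpace Ω] {P : Measure Ω} {X Y : Ω → ℝ}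

theorem integrable_sq_sub_one_mul_max [IsFiniteMeasure P] (hX : MemLp X 3 P) :
    Integrable (fun ω => (X ω ^ 2 - 1) * max (X ω) 0) P := by
  have hXm := hX.aestronglyMeasurable.aemeasurable
  refine ((hX : MemLp X (3 : ℕ) P).integrable_norm_pow'.add
    (hX.integrable (by norm_num)).norm).mono' (by fun_prop) (ae_of_all _ fun ω => ?_)
  simp only [Pi.add_apply, Real.norm_eq_abs, abs_mul]
  have h₁ : |X ω ^ 2 - 1| ≤ |X ω| ^ 2 + 1 := by
    rw [← sq_abs]
    exact (abs_sub _ _).trans (by simp)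
  calc |X ω ^ 2 - 1| * |max (X ω) 0| ≤ (|X ω| ^ 2 + 1) * |X ω| :=
        mul_le_mul h₁ (abs_max_zero_le _) (abs_nonneg _) (by positivity)
    _ = |X ω| ^ 3 + |X ω| := by ring

theorem integrable_mul_max (hX : MemLp X 2 P) :
    Integrable (fun ω => X ω * max (X ω) 0) P := by
  have hXm := hX.aestronglyMeasurable.aemeasurable
  refine hX.integrable_sq.mono' (by fun_prop) (ae_of_all _ fun ω => ?_)
  rw [Real.norm_eq_abs, abs_mul, sq, ← abs_mul_abs_self]
  exact mul_le_mul_of_nonneg_left (abs_max_zero_le _) (abs_nonneg _)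

theorem integral_sq_sub_mul_max_of_indepFun (hX : HasLaw X (gaussianReal 0 1) P)
    (hY : MemLp Y 2 P) (hXY : IndepFun X Y P) (hY₀ : ∫ ω, Y ω ∂P = 0) (a : ℝ) :
    ∫ ω, ((a * X ω + Y ω) ^ 2 - a ^ 2 - ∫ ω', Y ω' ^ 2 ∂P) * max (X ω) 0 ∂P
      = (√(2 * π))⁻¹ * a ^ 2 := by
  have := hX.isProbabilityMeasure
  set s := ∫ ω, Y ω ^ 2 ∂P
  have hXm := hX.aemeasurable
  have hYm := hY.aestronglyMeasurable.aemeasurable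
  have hXY₂ : IndepFun (fun ω => X ω * max (X ω) 0) Y P :=
    hXY.comp (φ := fun x => x * max x 0) (ψ := id) (by fun_prop) measurable_id
  have hXY₃ : IndepFun (fun ω => max (X ω) 0) (fun ω => Y ω ^ 2 - s) P :=
    hXY.comp (φ := fun x => max x 0) (ψ := fun y => y ^ 2 - s) (by fun_prop) (by fun_prop)
  have hT₁ := (integrable_sq_sub_one_mul_max
    (hX.hasGaussianLaw.memLp (by norm_num))).const_mul (a ^ 2)
  have hT₂ : Integrable (fun ω => 2 * a * (X ω * max (X ω) 0 * Y ω)) P :=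
    (hXY₂.integrable_mul (integrable_mul_max hX.hasGaussianLaw.memLp_two)
      (hY.integrable one_le_two)).const_mul (2 * a)
  have hT₃ : Integrable (fun ω => max (X ω) 0 * (Y ω ^ 2 - s)) P :=
    hXY₃.integrable_mul hX.hasGaussianLaw.integrable.pos_part
      (hY.integrable_sq.sub (integrable_const s))
  have hE₁ : ∫ ω, (X ω ^ 2 - 1) * max (X ω) 0 ∂P = (√(2 * π))⁻¹ :=
    (hX.integral_comp (f := fun x => (x ^ 2 - 1) * max x 0) (by fun_prop)).trans
      integral_sq_sub_one_mul_max_gaussianReal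
  have hE₃ : ∫ ω, (Y ω ^ 2 - s) ∂P = 0 := by
    rw [integral_sub hY.integrable_sq (integrable_const s), integral_const]
    simp [s]
  calc ∫ ω, ((a * X ω + Y ω) ^ 2 - a ^ 2 - s) * max (X ω) 0 ∂P
      = ∫ ω, (a ^ 2 * ((X ω ^ 2 - 1) * max (X ω) 0) + 2 * a * (X ω * max (X ω) 0 * Y ω)
          + max (X ω) 0 * (Y ω ^ 2 - s)) ∂P := by
        congr 1 with ω
        ring
    _ = a ^ 2 * ∫ ω, (X ω ^ 2 - 1) * max (X ω) 0 ∂P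
          + 2 * a * ((∫ ω, X ω * max (X ω) 0 ∂P) * ∫ ω, Y ω ∂P)
          + (∫ ω, max (X ω) 0 ∂P) * ∫ ω, (Y ω ^ 2 - s) ∂P := by
        rw [integral_add (hT₁.fun_add hT₂) hT₃, integral_add hT₁ hT₂, integral_const_mul,
          integral_const_mul, hXY₂.integral_fun_mul_eq_mul_integral (by fun_prop) (by fun_prop),
          hXY₃.integral_fun_mul_eq_mul_integral (by fun_prop) (by fun_prop)]
    _ = (√(2 * π))⁻¹ * a ^ 2 := by
        rw [hE₁, hY₀, hE₃]
        ring

end IndepFun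

section StdGaussian

variable {E : Type*} [NormedAddCommGroup E] [InnerProductSpace ℝ E] [FiniteDimensional ℝ E]
  [MeasurableSpace E] [BorelSpace E]

theorem integrable_exp_neg_sq_norm_div_two : Integrable (fun z : E => exp (-‖z‖ ^ 2 / 2)) := by
  refine Integrable.of_integral_ne_zero ?_
  have heq : (fun z : E => exp (-‖z‖ ^ 2 / 2)) = fun z => exp (-(1 / 2) * ‖z‖ ^ 2) := by
    ext z
    ring_nf
  rw [heq, GaussianFourier.integral_rexp_neg_mul_sq_norm (by norm_num)]
  positivity

theorem withDensity_gaussian_eq_stdGaussian :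
    (volume : Measure E).withDensity
        (fun z => ENNReal.ofReal ((2 * π) ^ (-(finrank ℝ E : ℝ) / 2) * exp (-‖z‖ ^ 2 / 2)))
      = stdGaussian E := by
  have : IsFiniteMeasure ((volume : Measure E).withDensity
      (fun z => ENNReal.ofReal ((2 * π) ^ (-(finrank ℝ E : ℝ) / 2) * exp (-‖z‖ ^ 2 / 2)))) :=
    isFiniteMeasure_withDensity_ofReal (integrable_exp_neg_sq_norm_div_two.const_mul _).2
  refine Measure.ext_of_charFun (funext fun t => ?_)
  rw [charFun_stdGaussian, charFun_apply, integral_withDensity_eq_integral_toReal_smul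
    (by fun_prop) (ae_of_all _ fun _ => ENNReal.ofReal_lt_top)]
  have h2π : (0 : ℝ) ≤ 2 * π := by positivity
  have hpow : ((π : ℂ) / (1 / 2)) ^ ((finrank ℝ E : ℂ) / 2)
      = (((2 * π) ^ ((finrank ℝ E : ℝ) / 2) : ℝ) : ℂ) := by
    rw [Complex.ofReal_cpow h2π]
    push_cast
    ring_nf
  calc ∫ z, (ENNReal.ofReal ((2 * π) ^ (-(finrank ℝ E : ℝ) / 2) * exp (-‖z‖ ^ 2 / 2))).toReal
        • Complex.exp (⟪z, t⟫ * Complex.I)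
      = ∫ z, (((2 * π) ^ (-(finrank ℝ E : ℝ) / 2) : ℝ) : ℂ)
          * Complex.exp (-(1 / 2) * ‖z‖ ^ 2 + Complex.I * ⟪t, z⟫) := by
        congr 1 with z
        rw [ENNReal.toReal_ofReal (by positivity), Complex.real_smul, Complex.ofReal_mul,
          mul_assoc, Complex.ofReal_exp, ← Complex.exp_add, real_inner_comm]
        push_cast
        ring_nf
    _ = Complex.exp (-‖t‖ ^ 2 / 2) := by
        rw [integral_const_mul, GaussianFourier.integral_cexp_neg_mul_sq_norm_add (by norm_num),
          hpow, ← mul_assoc, ← Complex.ofReal_mul, neg_div, rpow_neg h2π,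
          inv_mul_cancel₀ (by positivity), Complex.ofReal_one, one_mul, Complex.I_sq]
        ring_nf

theorem integral_gaussian_mul_eq_integral_stdGaussian (f : E → ℝ) :
    ∫ z, (2 * π) ^ (-(finrank ℝ E : ℝ) / 2) * exp (-‖z‖ ^ 2 / 2) * f z
      = ∫ z, f z ∂stdGaussian E := by
  rw [← withDensity_gaussian_eq_stdGaussian, integral_withDensity_eq_integral_toReal_smul
    (by fun_prop) (ae_of_all _ fun _ => ENNReal.ofReal_lt_top)]
  congr 1 with z
  rw [ENNReal.toReal_ofReal (by positivity), smul_eq_mul]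

theorem hasGaussianLaw_inner_stdGaussian (x : E) :
    HasGaussianLaw (fun z => ⟪x, z⟫) (stdGaussian E) :=
  IsGaussian.hasGaussianLaw_id.map_fun (innerSL ℝ x)

theorem integral_inner_stdGaussian (x : E) : ∫ z, ⟪x, z⟫ ∂stdGaussian E = 0 :=
  integral_strongDual_stdGaussian (innerSL ℝ x)

theorem integral_inner_mul_inner_stdGaussian (x y : E) :
    ∫ z, ⟪x, z⟫ * ⟪y, z⟫ ∂stdGaussian E = ⟪x, y⟫ := by
  have h := congr($(covarianceBilin_stdGaussian (E := E)) x y)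
  rw [covarianceBilin_apply IsGaussian.memLp_two_id] at h
  simpa [integral_id_stdGaussian] using h

theorem hasLaw_inner_stdGaussian {ν : E} (hν : ‖ν‖ = 1) :
    HasLaw (fun z => ⟪ν, z⟫) (gaussianReal 0 1) (stdGaussian E) where
  aemeasurable := by fun_prop
  map_eq := by
    have hvar : Var[fun z => ⟪ν, z⟫; stdGaussian E] = 1 := by
      simpa [hν] using variance_dual_stdGaussian (innerSL ℝ ν)
    rw [(hasGaussianLaw_inner_stdGaussian ν).map_eq_gaussianReal, integral_inner_stdGaussian,
      hvar, Real.toNNReal_one]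

theorem indepFun_inner_stdGaussian {x y : E} (h : ⟪x, y⟫ = 0) :
    IndepFun (fun z => ⟪x, z⟫) (fun z => ⟪y, z⟫) (stdGaussian E) := by
  refine HasGaussianLaw.indepFun_of_covariance_eq_zero
    (IsGaussian.hasGaussianLaw_id.map_fun ((innerSL ℝ x).prod (innerSL ℝ y))) ?_
  rw [← covarianceBilin_apply_eq_cov IsGaussian.memLp_two_id, covarianceBilin_stdGaussian]
  exact h

theorem integral_inner_sq_sub_mul_max_inner_stdGaussian {ν : E} (hν : ‖ν‖ = 1) (ξ : E) :
    ∫ z, (⟪ξ, z⟫ ^ 2 - ‖ξ‖ ^ 2) * max ⟪ν, z⟫ 0 ∂stdGaussian E = (√(2 * π))⁻¹ * ⟪ξ, ν⟫ ^ 2 := by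
  rw [real_inner_comm]
  set a := ⟪ν, ξ⟫
  set w := ξ - a • ν
  have hνw : ⟪ν, w⟫ = 0 := by simp [w, inner_sub_right, inner_smul_right, hν, a]
  have hξ : ‖ξ‖ ^ 2 = a ^ 2 + ∫ z, ⟪w, z⟫ ^ 2 ∂stdGaussian E := by
    simp only [sq, integral_inner_mul_inner_stdGaussian, real_inner_self_eq_norm_mul_norm]
    have hdecomp : ξ = a • ν + w := by simp [w]
    conv_lhs => rw [hdecomp]
    rw [norm_add_sq_eq_norm_sq_add_norm_sq_real (by simp [real_inner_smul_left, hνw]),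
      norm_smul, hν, mul_one, Real.norm_eq_abs, abs_mul_abs_self]
  have hsplit (z : E) : ⟪ξ, z⟫ = a * ⟪ν, z⟫ + ⟪w, z⟫ := by
    simp [w, inner_sub_left, inner_smul_left]
  simp_rw [hsplit, hξ, ← sub_sub]
  exact integral_sq_sub_mul_max_of_indepFun (hasLaw_inner_stdGaussian hν)
    (hasGaussianLaw_inner_stdGaussian w).memLp_two (indepFun_inner_stdGaussian hνw)
    (integral_inner_stdGaussian w) a

end StdGaussian

theorem EuclideanSpace.dotProduct_eq_inner {ι : Type*} [Fintype ι] (x y : EuclideanSpace ℝ ι) :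
    dotProduct (fun i => x i) (fun i => y i) = ⟪x, y⟫ := by
  simp [PiLp.inner_apply, dotProduct, mul_comm]

theorem dotProduct_stdGaussHessian_mulVec {d : ℕ} (ξ z : EuclideanSpace ℝ (Fin d)) :
    dotProduct (fun i => ξ i) ((stdGaussHessian d z).mulVec fun i => ξ i)
      = stdGauss d z * (⟪ξ, z⟫ ^ 2 - ‖ξ‖ ^ 2) := by
  simp only [stdGaussHessian, Matrix.smul_mulVec, Matrix.sub_mulVec, Matrix.vecMulVec_mulVec,
    Matrix.one_mulVec, dotProduct_smul, dotProduct_sub, EuclideanSpace.dotProduct_eq_inner]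
  rw [smul_eq_mul, MulOpposite.smul_eq_mul_unop, MulOpposite.unop_op, real_inner_comm z,
    real_inner_self_eq_norm_sq]
  ring

theorem stmt_19_general (d : ℕ) (ν : EuclideanSpace ℝ (Fin d)) (hν : ‖ν‖ = 1)
    (ξ : EuclideanSpace ℝ (Fin d)) :
    ∫ z : EuclideanSpace ℝ (Fin d),
        (dotProduct (fun i => ξ i) ((stdGaussHessian d z).mulVec fun i => ξ i)) *
          max (dotProduct (fun i => ν i) fun i => z i) 0
      = (1 / Real.sqrt (2 * Real.pi)) *
          (dotProduct (fun i => ξ i) fun i => ν i) ^ 2 := by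
  calc _ = ∫ z, stdGauss d z * ((⟪ξ, z⟫ ^ 2 - ‖ξ‖ ^ 2) * max ⟪ν, z⟫ 0) := by
        simp only [dotProduct_stdGaussHessian_mulVec, EuclideanSpace.dotProduct_eq_inner, mul_assoc]
    _ = ∫ z, (⟪ξ, z⟫ ^ 2 - ‖ξ‖ ^ 2) * max ⟪ν, z⟫ 0 ∂stdGaussian _ := by
        simpa [finrank_euclideanSpace_fin, stdGauss, mul_assoc] using
          integral_gaussian_mul_eq_integral_stdGaussian
            (fun z : EuclideanSpace ℝ (Fin d) => (⟪ξ, z⟫ ^ 2 - ‖ξ‖ ^ 2) * max ⟪ν, z⟫ 0)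
    _ = _ := by
        rw [integral_inner_sq_sub_mul_max_inner_stdGaussian hν, EuclideanSpace.dotProduct_eq_inner,
          one_div]

theorem stmt_19 (d : ℕ) (hd : 1 ≤ d) (ν : EuclideanSpace ℝ (Fin d)) (hν : ‖ν‖ = 1)
    (ξ : EuclideanSpace ℝ (Fin d)) :
    ∫ z : EuclideanSpace ℝ (Fin d),
        (dotProduct (fun i => ξ i) ((stdGaussHessian d z).mulVec fun i => ξ i)) *
          max (dotProduct (fun i => ν i) fun i => z i) 0
      = (1 / Real.sqrt (2 * Real.pi)) *
          (dotProduct (fun i => ξ i) fun i => ν i) ^ 2 :=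
  stmt_19_general d ν hν ξ
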